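/- Let n be a positive integer. For k = 1, 2, let μ_k ∈ ℝⁿ be a row vector with all entries positive, let R_k be a real n × n matrix with diag(μ_k)·R_k symmetric, let t_k ∈ ℝ, and let P_k, P_k' be n × n permutation matrices. If μ₁P₁ = μ₂P₂ and P₁ᵀ·exp(R₁t₁)·P₁' = P₂ᵀ·exp(R₂t₂)·P₂', then P₁ᵀP₁' = P₂ᵀP₂'. -/

import Mathlib

open Matrix

/-- The permutation matrix of a permutation `σ`. -/
def permMatrix {n : ℕ} (σ : Equiv.Perm (Fin n)) : Matrix (Fin n) (Fin n) ℝ :=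
  Matrix.of fun i j => if σ i = j then 1 else 0

/-!
Put `D = diag(μ₁P₁) = diag(μ₂P₂)` and `W_k = P_kᵀP_k'`. Moving `D` through `P_kᵀ` turns
`D · P_kᵀ exp(R_k t_k) P_k'` into `B_k W_k`, where `B_k = P_kᵀ diag(μ_k) exp(R_k t_k) P_k`.
Each `B_k` is positive definite, because `diag(μ_k)^{1/2} R_k diag(μ_k)^{-1/2}` is symmetric,
and each `W_k` is orthogonal, so `B₁W₁ = B₂W₂` are two polar decompositions of one matrix.
Then `B₁² = B₂²`, hence `B₁ = B₂` by uniqueness of positive square roots, and `W₁ = W₂`.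
-/

open scoped ComplexOrder

lemma permMatrix_eq_equivPermMatrix {n : ℕ} (σ : Equiv.Perm (Fin n)) :
    permMatrix σ = σ.permMatrix ℝ := by
  ext i j
  simp [permMatrix, PEquiv.toMatrix_apply, eq_comm]

namespace Matrix

open Equiv

variable {n : Type*} [Fintype n] [DecidableEq n]

section Polar

variable {𝕜 : Type*} [RCLike 𝕜]

open scoped MatrixOrder in
theorem PosSemidef.eq_of_mul_unitary_eq_mul_unitary {A B U V : Matrix n n 𝕜}
    (hA : A.PosSemidef) (hB : B.PosSemidef) (hU : U ∈ unitaryGroup n 𝕜)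
    (hV : V ∈ unitaryGroup n 𝕜) (h : A * U = B * V) : A = B := by
  have mul_conjTranspose_self {C W : Matrix n n 𝕜} (hC : C.IsHermitian)
      (hW : W ∈ unitaryGroup n 𝕜) : (C * W) * (C * W)ᴴ = C ^ 2 := by
    rw [conjTranspose_mul, hC.eq, mul_assoc, ← mul_assoc W, ← star_eq_conjTranspose,
      mem_unitaryGroup_iff.mp hW, one_mul, sq]
  refine (CFC.sq_eq_sq_iff A B hA.nonneg hB.nonneg).mp ?_
  rw [← mul_conjTranspose_self hA.1 hU, ← mul_conjTranspose_self hB.1 hV, h]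

theorem PosDef.unitary_eq_of_mul_eq_mul {A B U V : Matrix n n 𝕜}
    (hA : A.PosDef) (hB : B.PosSemidef) (hU : U ∈ unitaryGroup n 𝕜)
    (hV : V ∈ unitaryGroup n 𝕜) (h : A * U = B * V) : U = V := by
  obtain rfl := hA.posSemidef.eq_of_mul_unitary_eq_mul_unitary hB hU hV h
  exact hA.isUnit.mul_left_cancel h

theorem IsHermitian.posDef_exp {A : Matrix n n 𝕜} (hA : A.IsHermitian) :
    (NormedSpace.exp A).PosDef := by
  set H := NormedSpace.exp ((2⁻¹ : ℝ) • A)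
  have hH : star H = H := by
    rw [star_eq_conjTranspose, ← exp_conjTranspose, conjTranspose_smul, hA.eq, star_trivial]
  have hsplit : NormedSpace.exp A = star H * 1 * H := by
    rw [hH, mul_one, ← sq, ← exp_nsmul, two_nsmul, ← add_smul]
    norm_num
  rw [hsplit]
  exact (isUnit_exp _).posDef_star_left_conjugate_iff.mpr PosDef.one

theorem permMatrix_mem_unitaryGroup (σ : Perm n) : σ.permMatrix 𝕜 ∈ unitaryGroup n 𝕜 := by
  rw [mem_unitaryGroup_iff, star_eq_conjTranspose, conjTranspose_permMatrix, ← permMatrix_mul,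
    inv_mul_cancel, permMatrix_one]

theorem PosDef.transpose_permMatrix_mul_mul {X : Matrix n n 𝕜} (hX : X.PosDef) (σ : Perm n) :
    ((σ.permMatrix 𝕜)ᵀ * X * σ.permMatrix 𝕜).PosDef := by
  have hP : IsUnit (σ.permMatrix 𝕜) := Unitary.isUnit_coe (U := ⟨_, permMatrix_mem_unitaryGroup σ⟩)
  rw [transpose_permMatrix, ← conjTranspose_permMatrix, ← star_eq_conjTranspose]
  exact hP.posDef_star_left_conjugate_iff.mpr hX

end Polar

theorem posDef_diagonal_mul_exp {μ : n → ℝ} (hμ : ∀ i, 0 < μ i) {R : Matrix n n ℝ}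
    (hR : (diagonal μ * R).IsSymm) : (diagonal μ * NormedSpace.exp R).PosDef := by
  set S : Matrix n n ℝ := diagonal fun i => √(μ i)
  have hSS : S * S = diagonal μ := by
    simp [S, diagonal_mul_diagonal, Real.mul_self_sqrt (hμ _).le]
  have hSunit : IsUnit S :=
    isUnit_diagonal.mpr (Pi.isUnit_iff.mpr fun i => (Real.sqrt_pos.mpr (hμ i)).ne'.isUnit)
  have hdet : IsUnit S.det := (isUnit_iff_isUnit_det S).mp hSunit
  have hSstar : star S = S := by
    rw [star_eq_conjTranspose, diagonal_conjTranspose, star_trivial]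
  set A : Matrix n n ℝ := S * R * S⁻¹
  have hA : A.IsHermitian := by
    have hAeq : A = (S⁻¹)ᴴ * (diagonal μ * R) * S⁻¹ := by
      rw [conjTranspose_nonsing_inv, ← star_eq_conjTranspose, hSstar, ← hSS]
      simp only [A, mul_assoc, nonsing_inv_mul_cancel_left _ _ hdet]
    rw [hAeq]
    exact isHermitian_conjTranspose_mul_mul _
      (by rwa [IsHermitian, conjTranspose_eq_transpose_of_trivial])
  have hexp : diagonal μ * NormedSpace.exp R = star S * NormedSpace.exp A * S := by
    have hRconj : R = S⁻¹ * A * S := by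
      simp only [A, mul_assoc, nonsing_inv_mul _ hdet, mul_one]
      rw [← mul_assoc, nonsing_inv_mul _ hdet, one_mul]
    rw [hRconj, exp_conj' _ _ hSunit, hSstar, ← hSS]
    simp only [mul_assoc, mul_nonsing_inv_cancel_left _ _ hdet]
  rw [hexp]
  exact hSunit.posDef_star_left_conjugate_iff.mpr hA.posDef_exp

section Permutation

variable {R : Type*} [CommRing R]

theorem diagonal_vecMul_permMatrix_mul_transpose (μ : n → R) (σ : Perm n) :
    diagonal (μ ᵥ* σ.permMatrix R) * (σ.permMatrix R)ᵀ = (σ.permMatrix R)ᵀ * diagonal μ := by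
  rw [transpose_permMatrix, PEquiv.toMatrix_toPEquiv_mul, PEquiv.mul_toMatrix_toPEquiv,
    vecMul_permMatrix]
  ext i j
  simp [diagonal_apply, Perm.inv_def, Equiv.symm_apply_eq]

theorem diagonal_vecMul_permMatrix_mul (μ : n → R) (σ σ' : Perm n) (E : Matrix n n R) :
    diagonal (μ ᵥ* σ.permMatrix R) * ((σ.permMatrix R)ᵀ * E * σ'.permMatrix R) =
      (σ.permMatrix R)ᵀ * (diagonal μ * E) * σ.permMatrix R *
        ((σ.permMatrix R)ᵀ * σ'.permMatrix R) := by
  have hP : σ.permMatrix R * (σ.permMatrix R)ᵀ = 1 := by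
    rw [transpose_permMatrix, ← permMatrix_mul, inv_mul_cancel, permMatrix_one]
  rw [← mul_assoc, ← mul_assoc, diagonal_vecMul_permMatrix_mul_transpose]
  simp only [mul_assoc, ← mul_assoc (σ.permMatrix R) _ (σ'.permMatrix R), hP, one_mul]

end Permutation

end Matrix

theorem perm_product_determined_general {n : ℕ}
    (μ₁ μ₂ : Fin n → ℝ) (hμ₁ : ∀ i, 0 < μ₁ i) (hμ₂ : ∀ i, 0 < μ₂ i)
    (R₁ R₂ : Matrix (Fin n) (Fin n) ℝ)
    (hsym₁ : (Matrix.diagonal μ₁ * R₁).IsSymm) (hsym₂ : (Matrix.diagonal μ₂ * R₂).IsSymm)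
    (t₁ t₂ : ℝ) (σ₁ σ₁' σ₂ σ₂' : Equiv.Perm (Fin n))
    (hμ : Matrix.vecMul μ₁ (permMatrix σ₁) = Matrix.vecMul μ₂ (permMatrix σ₂))
    (hM : (permMatrix σ₁)ᵀ * NormedSpace.exp (t₁ • R₁) * permMatrix σ₁' =
      (permMatrix σ₂)ᵀ * NormedSpace.exp (t₂ • R₂) * permMatrix σ₂') :
    (permMatrix σ₁)ᵀ * permMatrix σ₁' = (permMatrix σ₂)ᵀ * permMatrix σ₂' := by
  simp only [permMatrix_eq_equivPermMatrix] at hμ hM ⊢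
  have hB {μ : Fin n → ℝ} (hμ : ∀ i, 0 < μ i) {R : Matrix (Fin n) (Fin n) ℝ}
      (hsym : (diagonal μ * R).IsSymm) (t : ℝ) (σ : Equiv.Perm (Fin n)) :
      ((σ.permMatrix ℝ)ᵀ * (diagonal μ * NormedSpace.exp (t • R)) *
        σ.permMatrix ℝ).PosDef := by
    refine (posDef_diagonal_mul_exp hμ ?_).transpose_permMatrix_mul_mul σ
    rw [Matrix.mul_smul]
    exact hsym.smul t
  have hW (σ σ' : Equiv.Perm (Fin n)) :
      (σ.permMatrix ℝ)ᵀ * σ'.permMatrix ℝ ∈ unitaryGroup (Fin n) ℝ := by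
    rw [transpose_permMatrix]
    exact mul_mem (permMatrix_mem_unitaryGroup _) (permMatrix_mem_unitaryGroup _)
  refine (hB hμ₁ hsym₁ t₁ σ₁).unitary_eq_of_mul_eq_mul (hB hμ₂ hsym₂ t₂ σ₂).posSemidef
    (hW σ₁ σ₁') (hW σ₂ σ₂') ?_
  rw [← diagonal_vecMul_permMatrix_mul, ← diagonal_vecMul_permMatrix_mul, hμ, hM]

/-- The product `P₁ᵀP₁'` is determined by `μ₁P₁` and `P₁ᵀ·exp(R₁t₁)·P₁'` when
`diag(μ₁)·R₁` is symmetric and `μ₁` is positive. -/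
theorem perm_product_determined {n : ℕ} (hn : 0 < n)
    (μ₁ μ₂ : Fin n → ℝ) (hμ₁ : ∀ i, 0 < μ₁ i) (hμ₂ : ∀ i, 0 < μ₂ i)
    (R₁ R₂ : Matrix (Fin n) (Fin n) ℝ)
    (hsym₁ : (Matrix.diagonal μ₁ * R₁).IsSymm) (hsym₂ : (Matrix.diagonal μ₂ * R₂).IsSymm)
    (t₁ t₂ : ℝ) (σ₁ σ₁' σ₂ σ₂' : Equiv.Perm (Fin n))
    (hμ : Matrix.vecMul μ₁ (permMatrix σ₁) = Matrix.vecMul μ₂ (permMatrix σ₂))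
    (hM : (permMatrix σ₁)ᵀ * NormedSpace.exp (t₁ • R₁) * permMatrix σ₁' =
      (permMatrix σ₂)ᵀ * NormedSpace.exp (t₂ • R₂) * permMatrix σ₂') :
    (permMatrix σ₁)ᵀ * permMatrix σ₁' = (permMatrix σ₂)ᵀ * permMatrix σ₂' :=
  perm_product_determined_general μ₁ μ₂ hμ₁ hμ₂ R₁ R₂ hsym₁ hsym₂ t₁ t₂ σ₁ σ₁' σ₂ σ₂' hμ hM
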